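/- arXiv:2003.05143 — 2 statements merged into one kernel-verified Lean document; each statement's English description precedes it below -/
import Mathlib

section
/- Let $(\Omega,\mathcal F,\mathbb P)$ be a probability space, $T>0$, and let $g:[0,T]\times\Omega\to\mathbb R$ be jointly measurable with $g\le 0$ and with $s\mapsto g(s,\omega)$ Lebesgue integrable on $[0,T]$ for a.e. $\omega$, and assume $\mathbb E[\int_0^T |g_s|\exp(\int_0^s g_r\,dr)\,ds]<\infty$. Set $h(t):=\mathbb E[\exp(\int_0^t g_s\,ds)]$. Then $h(t)>0$ for all $t$ and $h(t)=\exp\Big(\int_0^t \frac{\mathbb E[g_s\exp(\int_0^s g_r\,dr)]}{h(s)}\,ds\Big)$ for every $t\in[0,T]$. -/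
/-!
Pathwise, `G_t = ∫_0^t g_r dr` is absolutely continuous, so the chain rule for absolutely
continuous functions gives `e^{G_t} = 1 + ∫_0^t g_s e^{G_s} ds`. As `g ≤ 0`, the integrand has a
sign, so `∫_0^t |g_s| e^{G_s} ds = 1 - e^{G_t} ≤ 1`; hence Fubini applies and
`h(t) = 1 + ∫_0^t E[g_s e^{G_s}] ds`. So `h` is absolutely continuous and positive, and the same
chain rule applied to `log ∘ h` gives `log h(t) = ∫_0^t E[g_s e^{G_s}] / h(s) ds`.
-/

open MeasureTheory intervalIntegral Set Filter

theorem LipschitzOnWith.comp_absolutelyContinuousOnInterval {X Y : Type*} [PseudoMetricSpace X]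
    [PseudoMetricSpace Y] {φ : X → Y} {K : NNReal} {s : Set X} {f : ℝ → X} {a b : ℝ}
    (hφ : LipschitzOnWith K φ s) (hf : AbsolutelyContinuousOnInterval f a b)
    (hfs : MapsTo f (uIcc a b) s) : AbsolutelyContinuousOnInterval (φ ∘ f) a b := by
  unfold AbsolutelyContinuousOnInterval at hf ⊢
  apply squeeze_zero' (Eventually.of_forall fun _ ↦ Finset.sum_nonneg fun _ _ ↦ dist_nonneg) ?_
    (by simpa using hf.const_mul (K : ℝ))
  rw [eventually_inf_principal]
  filter_upwards with E hE
  rw [Finset.mul_sum]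
  gcongr with i hi
  exact hφ.dist_le_mul _ (hfs (hE.1 i hi).1) _ (hfs (hE.1 i hi).2)

theorem ContDiffOn.comp_absolutelyContinuousOnInterval {E E' : Type*} [NormedAddCommGroup E]
    [NormedSpace ℝ E] [NormedAddCommGroup E'] [NormedSpace ℝ E'] {φ : E → E'} {U : Set E}
    {F : ℝ → E} {a b : ℝ} (hφ : ContDiffOn ℝ 1 φ U) (hU : IsOpen U)
    (hF : AbsolutelyContinuousOnInterval F a b) (hFU : MapsTo F (uIcc a b) U) :
    AbsolutelyContinuousOnInterval (φ ∘ F) a b := by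
  have hlocal : LocallyLipschitzOn U φ := fun y hy ↦ by
    obtain ⟨K, t, ht, hK⟩ := (hφ.contDiffAt (hU.mem_nhds hy)).exists_lipschitzOnWith
    exact ⟨K, t, mem_nhdsWithin_of_mem_nhds ht, hK⟩
  obtain ⟨K, hK⟩ := (hlocal.mono (mapsTo_iff_image_subset.1 hFU)).exists_lipschitzOnWith_of_compact
    (isCompact_uIcc.image_of_continuousOn hF.continuousOn)
  exact hK.comp_absolutelyContinuousOnInterval hF (mapsTo_image F _)

theorem AbsolutelyContinuousOnInterval.integral_deriv_comp_mul_deriv {φ F : ℝ → ℝ} {U : Set ℝ}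
    {a b : ℝ} (hF : AbsolutelyContinuousOnInterval F a b) (hU : IsOpen U)
    (hφ : ContDiffOn ℝ 1 φ U) (hFU : MapsTo F (uIcc a b) U) :
    ∫ x in a..b, deriv φ (F x) * deriv F x = φ (F b) - φ (F a) := by
  refine (intervalIntegral.integral_congr_ae ?_).trans
    (hφ.comp_absolutelyContinuousOnInterval hU hF hFU).integral_deriv_eq_sub
  filter_upwards [hF.ae_differentiableAt] with x hFx hx
  have hx' : x ∈ uIcc a b := uIoc_subset_uIcc hx
  have hφx : DifferentiableAt ℝ φ (F x) :=
    (hφ.contDiffAt (hU.mem_nhds (hFU hx'))).differentiableAt one_ne_zero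
  exact (deriv_comp x hφx (hFx hx')).symm

theorem IntervalIntegrable.integral_deriv_comp_mul {φ F f : ℝ → ℝ} {U : Set ℝ} {a b : ℝ}
    (hf : IntervalIntegrable f volume a b) (hF : ∀ x ∈ uIcc a b, F x = F a + ∫ t in a..x, f t)
    (hU : IsOpen U) (hφ : ContDiffOn ℝ 1 φ U) (hFU : MapsTo F (uIcc a b) U) :
    ∫ x in a..b, deriv φ (F x) * f x = φ (F b) - φ (F a) := by
  set F' : ℝ → ℝ := fun x ↦ F a + ∫ t in a..x, f t
  have hF'ac : AbsolutelyContinuousOnInterval F' a b :=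
    (LipschitzWith.const (F a)).lipschitzOnWith.absolutelyContinuousOnInterval.add
      (hf.absolutelyContinuousOnInterval_intervalIntegral left_mem_uIcc)
  have hFF' : EqOn F F' (uIcc a b) := hF
  have hderiv : ∀ᵐ x, x ∈ uIoc a b → f x = deriv F' x := by
    filter_upwards [hf.ae_hasDerivAt_integral] with x hx hxab
    exact ((hx (uIoc_subset_uIcc hxab) a left_mem_uIcc).const_add (F a)).deriv.symm
  calc ∫ x in a..b, deriv φ (F x) * f x = ∫ x in a..b, deriv φ (F' x) * deriv F' x := by
        rw [integral_congr fun x hx ↦ by rw [hFF' hx]]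
        exact integral_congr_ae (hderiv.mono fun x hx hxab ↦ by rw [hx hxab])
    _ = φ (F b) - φ (F a) := by
        rw [hF'ac.integral_deriv_comp_mul_deriv hU hφ (hFU.congr hFF'),
          ← hFF' right_mem_uIcc, ← hFF' left_mem_uIcc]

theorem IntervalIntegrable.exp_integral_eq_one_add {f : ℝ → ℝ} {a b : ℝ}
    (hf : IntervalIntegrable f volume a b) :
    Real.exp (∫ x in a..b, f x) = 1 + ∫ x in a..b, f x * Real.exp (∫ t in a..x, f t) := by
  have h := hf.integral_deriv_comp_mul (F := fun x ↦ ∫ t in a..x, f t) (by simp)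
    isOpen_univ Real.contDiff_exp.contDiffOn (mapsTo_univ _ _)
  simp only [Real.deriv_exp, integral_same, Real.exp_zero] at h
  rw [← sub_eq_iff_eq_add', ← h]
  simp_rw [mul_comm]

theorem exp_integral_le_one_of_nonpos {f : ℝ → ℝ} (hf : ∀ r, f r ≤ 0) {a b : ℝ} (hab : a ≤ b) :
    Real.exp (∫ r in a..b, f r) ≤ 1 := by
  rw [Real.exp_le_one_iff, integral_of_le hab]
  exact integral_nonpos hf

theorem Measurable.intervalIntegral_primitive {α : Type*} [MeasurableSpace α] {g : ℝ → α → ℝ}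
    (hg : Measurable (Function.uncurry g)) (a : ℝ) :
    Measurable fun p : ℝ × α ↦ ∫ r in a..p.1, g r p.2 := by
  have hIoc : ∀ c d : ℝ × α → ℝ, Measurable c → Measurable d →
      Measurable fun p ↦ ∫ r in Ioc (c p) (d p), g r p.2 := by
    intro c d hc hd
    simp_rw [← MeasureTheory.integral_indicator measurableSet_Ioc, indicator_apply]
    refine (StronglyMeasurable.integral_prod_right'
      (f := fun q : (ℝ × α) × ℝ ↦ if q.2 ∈ Ioc (c q.1) (d q.1) then g q.2 q.1.2 else 0)
      ?_).measurable
    refine (Measurable.ite ?_ (hg.comp (measurable_snd.prodMk measurable_fst.snd))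
      measurable_const).stronglyMeasurable
    exact (measurableSet_lt (hc.comp measurable_fst) measurable_snd).inter
      (measurableSet_le measurable_snd (hd.comp measurable_fst))
  exact (hIoc _ _ measurable_const measurable_fst).sub (hIoc _ _ measurable_fst measurable_const)

section

variable {Ω : Type*} [MeasurableSpace Ω] {P : Measure Ω} {g : ℝ → Ω → ℝ} {T t : ℝ}

theorem integrable_mul_exp_integral_prod [IsFiniteMeasure P]
    (hmeas : Measurable (Function.uncurry g)) (hneg : ∀ s ω, g s ω ≤ 0)
    (hint : ∀ᵐ ω ∂P, IntegrableOn (fun s ↦ g s ω) (Icc 0 T)) (ht : t ∈ Icc 0 T) :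
    Integrable (fun p : ℝ × Ω ↦ g p.1 p.2 * Real.exp (∫ r in 0..p.1, g r p.2))
      ((volume.restrict (Ioc 0 t)).prod P) := by
  have hjoint : Measurable fun p : ℝ × Ω ↦ g p.1 p.2 * Real.exp (∫ r in 0..p.1, g r p.2) :=
    hmeas.mul (Real.measurable_exp.comp (hmeas.intervalIntegral_primitive 0))
  have hsub : Ioc 0 t ⊆ Icc 0 T := Ioc_subset_Icc_self.trans (Icc_subset_Icc_right ht.2)
  refine (integrable_prod_iff' hjoint.aestronglyMeasurable).2 ⟨?_, ?_⟩
  · filter_upwards [hint] with ω hω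
    refine (hω.mono_set hsub).mul_bdd (c := 1)
      (Real.measurable_exp.comp ((hmeas.intervalIntegral_primitive 0).comp
        measurable_prodMk_right)).aestronglyMeasurable ?_
    refine ae_restrict_of_forall_mem measurableSet_Ioc fun s hs ↦ ?_
    rw [Real.norm_of_nonneg (Real.exp_pos _).le]
    exact exp_integral_le_one_of_nonpos (hneg · ω) hs.1.le
  · refine Integrable.of_bound
      hjoint.stronglyMeasurable.norm.integral_prod_left'.aestronglyMeasurable 1 ?_
    filter_upwards [hint] with ω hω
    have hgω : IntervalIntegrable (g · ω) volume 0 t :=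
      (intervalIntegrable_iff_integrableOn_Ioc_of_le ht.1).2 (hω.mono_set hsub)
    rw [Real.norm_of_nonneg (integral_nonneg fun _ ↦ norm_nonneg _)]
    calc ∫ s in Ioc 0 t, ‖g s ω * Real.exp (∫ r in 0..s, g r ω)‖
        = -∫ s in 0..t, g s ω * Real.exp (∫ r in 0..s, g r ω) := by
          rw [integral_of_le ht.1, ← MeasureTheory.integral_neg]
          exact setIntegral_congr_fun measurableSet_Ioc fun s _ ↦
            Real.norm_of_nonpos (mul_nonpos_of_nonpos_of_nonneg (hneg s ω) (Real.exp_pos _).le)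
      _ = 1 - Real.exp (∫ r in 0..t, g r ω) := by rw [hgω.exp_integral_eq_one_add]; ring
      _ ≤ 1 := sub_le_self _ (Real.exp_pos _).le

theorem integral_exp_integral_eq_one_add [IsProbabilityMeasure P]
    (hmeas : Measurable (Function.uncurry g)) (hneg : ∀ s ω, g s ω ≤ 0)
    (hint : ∀ᵐ ω ∂P, IntegrableOn (fun s ↦ g s ω) (Icc 0 T)) (ht : t ∈ Icc 0 T) :
    ∫ ω, Real.exp (∫ r in 0..t, g r ω) ∂P =
      1 + ∫ s in 0..t, ∫ ω, g s ω * Real.exp (∫ r in 0..s, g r ω) ∂P := by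
  have hprod := integrable_mul_exp_integral_prod hmeas hneg hint ht
  calc ∫ ω, Real.exp (∫ r in 0..t, g r ω) ∂P
      = ∫ ω, (1 + ∫ s in Ioc 0 t, g s ω * Real.exp (∫ r in 0..s, g r ω)) ∂P := by
        refine integral_congr_ae ?_
        filter_upwards [hint] with ω hω
        rw [← integral_of_le ht.1]
        exact ((intervalIntegrable_iff_integrableOn_Icc_of_le ht.1).2
          (hω.mono_set (Icc_subset_Icc_right ht.2))).exp_integral_eq_one_add
    _ = 1 + ∫ s in 0..t, ∫ ω, g s ω * Real.exp (∫ r in 0..s, g r ω) ∂P := by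
        rw [integral_add (integrable_const 1) hprod.integral_prod_right, integral_of_le ht.1,
          ← integral_integral_swap (f := fun s ω ↦ g s ω * Real.exp (∫ r in 0..s, g r ω)) hprod]
        simp

end

theorem fpk_normalizer_exponential_representation_general
    {Ω : Type*} [MeasurableSpace Ω] (P : Measure Ω) [IsProbabilityMeasure P]
    (T : ℝ) (g : ℝ → Ω → ℝ)
    (hmeas : Measurable (Function.uncurry g))
    (hneg : ∀ s ω, g s ω ≤ 0)
    (hint : ∀ᵐ ω ∂P, IntegrableOn (fun s => g s ω) (Set.Icc 0 T))
    (h : ℝ → ℝ)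
    (hdef : ∀ t, h t = ∫ ω, Real.exp (∫ s in (0:ℝ)..t, g s ω) ∂P) :
    ∀ t ∈ Set.Icc (0:ℝ) T,
      0 < h t ∧
      h t = Real.exp (∫ s in (0:ℝ)..t,
        (∫ ω, g s ω * Real.exp (∫ r in (0:ℝ)..s, g r ω) ∂P) / h s) := by
  intro t ht
  set m : ℝ → ℝ := fun s ↦ ∫ ω, g s ω * Real.exp (∫ r in 0..s, g r ω) ∂P
  have hh_pos : ∀ s, 0 ≤ s → 0 < h s := fun s hs ↦ by
    rw [hdef]
    refine integral_exp_pos (Integrable.of_bound (Real.measurable_exp.comp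
      ((hmeas.intervalIntegral_primitive 0).comp measurable_prodMk_left)).aestronglyMeasurable 1
      (Eventually.of_forall fun ω ↦ ?_))
    rw [Real.norm_of_nonneg (Real.exp_pos _).le]
    exact exp_integral_le_one_of_nonpos (hneg · ω) hs
  have hh0 : h 0 = 1 := by simp [hdef]
  have hh_eq : ∀ s ∈ Icc 0 t, h s = h 0 + ∫ u in 0..s, m u := fun s hs ↦ by
    rw [hh0, hdef s]
    exact integral_exp_integral_eq_one_add hmeas hneg hint ⟨hs.1, hs.2.trans ht.2⟩
  have hm : IntervalIntegrable m volume 0 t :=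
    (intervalIntegrable_iff_integrableOn_Ioc_of_le ht.1).2
      (integrable_mul_exp_integral_prod hmeas hneg hint ht).integral_prod_left
  have hlog := hm.integral_deriv_comp_mul (uIcc_of_le ht.1 ▸ hh_eq) isOpen_compl_singleton
    Real.contDiffOn_log fun s hs ↦ (hh_pos s (uIcc_of_le ht.1 ▸ hs).1).ne'
  rw [hh0, Real.log_one, sub_zero] at hlog
  refine ⟨hh_pos t ht.1, ?_⟩
  calc h t = Real.exp (Real.log (h t)) := (Real.exp_log (hh_pos t ht.1)).symm
    _ = _ := by
      rw [← hlog]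
      exact congrArg Real.exp (integral_congr fun s _ ↦ by rw [Real.deriv_log, inv_mul_eq_div])

/-- The exponential representation (3.5) for the normalizing factor
`h(t) = E[exp(∫_0^t g_s ds)]`: `h` is positive and
`h(t) = exp(∫_0^t E[g_s exp(∫_0^s g_r dr)]/h(s) ds)`. -/
theorem fpk_normalizer_exponential_representation
    {Ω : Type*} [MeasurableSpace Ω] (P : Measure Ω) [IsProbabilityMeasure P]
    (T : ℝ) (hT : 0 < T) (g : ℝ → Ω → ℝ)
    (hmeas : Measurable (Function.uncurry g))
    (hneg : ∀ s ω, g s ω ≤ 0)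
    (hint : ∀ᵐ ω ∂P, IntegrableOn (fun s => g s ω) (Set.Icc 0 T))
    (hmom : Integrable
      (fun ω => ∫ s in (0:ℝ)..T, |g s ω| * Real.exp (∫ r in (0:ℝ)..s, g r ω)) P)
    (h : ℝ → ℝ)
    (hdef : ∀ t, h t = ∫ ω, Real.exp (∫ s in (0:ℝ)..t, g s ω) ∂P) :
    ∀ t ∈ Set.Icc (0:ℝ) T,
      0 < h t ∧
      h t = Real.exp (∫ s in (0:ℝ)..t,
        (∫ ω, g s ω * Real.exp (∫ r in (0:ℝ)..s, g r ω) ∂P) / h s) :=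
  fpk_normalizer_exponential_representation_general P T g hmeas hneg hint h hdef
end

section
/- Let $n\ge1$, $b\in\mathbb R^n$, $B\in\mathbb R^{n\times n}$, let $a\in\mathbb R^{n\times n}$ be symmetric positive definite, $\alpha\in\mathbb R$, $\delta\in\mathbb R^n$, and let $G\in\mathbb R^{n\times n}$ be symmetric positive semi-definite. Suppose $H\in\mathbb R^{n\times n}$ is symmetric and satisfies the algebraic Riccati equation $2HaH-B^{\top}H-HB-G=0$, and $v\in\mathbb R^n$ satisfies $2Hav-B^{\top}v-2Hb-\delta=0$. Define $r(x)=\alpha+\delta^{\top}x+x^{\top}Gx$, $\phi(x)=\exp(-v^{\top}x-x^{\top}Hx)$, and $\lambda=\alpha-\tfrac12 v^{\top}av+\mathrm{tr}(aH)+v^{\top}b$. Then for every $x\in\mathbb R^n$: $(b+Bx)^{\top}\nabla\phi(x)+\tfrac12\mathrm{tr}\big(a\,\nabla^2\phi(x)\big)-r(x)\phi(x)=-\lambda\,\phi(x)$. -/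
/-!
For `φ = exp q` with `q` quadratic, `∇φ = φ ∇q` and `∇²φ = φ (∇q ∇qᵀ + ∇²q)`, so
`(𝒜 - r)φ / φ` is a quadratic polynomial in `x`. Its quadratic and linear parts are the residuals
of the Riccati equation for `H` and of the linear equation for `v`, and its constant term is `-λ`.
-/

open Matrix

/-- The second partial derivative `∂²f/∂xᵢ∂xⱼ` of a function on `ℝⁿ`. -/
noncomputable def secondPartial {n : ℕ} (f : (Fin n → ℝ) → ℝ) (i j : Fin n)
    (x : Fin n → ℝ) : ℝ :=
  fderiv ℝ (fun z => fderiv ℝ f z (Pi.single j 1)) x (Pi.single i 1)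

section DotProduct

variable {ι 𝕜 E : Type*} [Fintype ι] [NontriviallyNormedField 𝕜]
  [NormedAddCommGroup E] [NormedSpace 𝕜 E]

noncomputable def dotProductCLM (c : ι → 𝕜) : (ι → 𝕜) →L[𝕜] 𝕜 :=
  ∑ i, c i • ContinuousLinearMap.proj i

@[simp]
lemma dotProductCLM_apply (c u : ι → 𝕜) : dotProductCLM c u = c ⬝ᵥ u := by
  simp [dotProductCLM, dotProduct]

lemma HasFDerivAt.dotProduct {f g : E → ι → 𝕜} {f' g' : E →L[𝕜] ι → 𝕜} {x : E}
    (hf : HasFDerivAt f f' x) (hg : HasFDerivAt g g' x) :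
    HasFDerivAt (fun z => f z ⬝ᵥ g z)
      ((dotProductCLM (f x)).comp g' + (dotProductCLM (g x)).comp f') x := by
  have hterm := fun i (_ : i ∈ Finset.univ) =>
    (hasFDerivAt_pi'.1 hf i).mul (hasFDerivAt_pi'.1 hg i)
  refine (HasFDerivAt.fun_sum hterm).congr_fderiv ?_
  ext u
  simp only [Finset.sum_add_distrib, _root_.add_apply, _root_.sum_apply, _root_.smul_apply,
    ContinuousLinearMap.comp_apply, ContinuousLinearMap.proj_apply, smul_eq_mul, dotProductCLM_apply]
  rfl

lemma hasFDerivAt_dotProduct_mulVec_self [CompleteSpace 𝕜] (M : Matrix ι ι 𝕜) (x : ι → 𝕜) :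
    HasFDerivAt (fun z => z ⬝ᵥ M *ᵥ z) (dotProductCLM ((M + Mᵀ) *ᵥ x)) x := by
  have hM : HasFDerivAt (M *ᵥ ·) (LinearMap.toContinuousLinearMap M.mulVecLin) x :=
    (LinearMap.toContinuousLinearMap M.mulVecLin).hasFDerivAt
  refine ((hasFDerivAt_id x).dotProduct hM).congr_fderiv ?_
  ext u
  simp only [id_eq, ContinuousLinearMap.comp_id, _root_.add_apply, ContinuousLinearMap.comp_apply,
    LinearMap.coe_toContinuousLinearMap', mulVecBilin_apply, dotProductCLM_apply, dotProduct_mulVec,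
    dotProduct_comm, add_mulVec, dotProduct_add, vecMul_transpose]
  ring

lemma hasFDerivAt_neg_dotProduct_sub_dotProduct_mulVec_self [CompleteSpace 𝕜] (v : ι → 𝕜)
    (H : Matrix ι ι 𝕜) (x : ι → 𝕜) :
    HasFDerivAt (fun z => -(v ⬝ᵥ z) - z ⬝ᵥ H *ᵥ z) (dotProductCLM (-v + -(H + Hᵀ) *ᵥ x)) x := by
  refine (((hasFDerivAt_const v x).dotProduct (hasFDerivAt_id x)).neg.sub
    (hasFDerivAt_dotProduct_mulVec_self H x)).congr_fderiv ?_
  ext u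
  simp only [ContinuousLinearMap.comp_id, id_eq, ContinuousLinearMap.comp_zero, add_zero,
    sub_eq_add_neg, _root_.add_apply, _root_.neg_apply, dotProductCLM_apply, add_dotProduct,
    neg_dotProduct, neg_mulVec]

end DotProduct

lemma fderiv_exp_apply_of_hasFDerivAt {ι : Type*} [Fintype ι] {q : (ι → ℝ) → ℝ} {g z : ι → ℝ}
    (hq : HasFDerivAt q (dotProductCLM g) z) (u : ι → ℝ) :
    fderiv ℝ (fun z => Real.exp (q z)) z u = Real.exp (q z) * (g ⬝ᵥ u) := by
  simp [hq.exp.fderiv]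

section SecondPartial

variable {n : ℕ} {q : (Fin n → ℝ) → ℝ} {c : Fin n → ℝ} {K : Matrix (Fin n) (Fin n) ℝ}

lemma secondPartial_exp_of_hasFDerivAt (hq : ∀ z, HasFDerivAt q (dotProductCLM (c + K *ᵥ z)) z)
    (i j : Fin n) (x : Fin n → ℝ) :
    secondPartial (fun z => Real.exp (q z)) i j x
      = Real.exp (q x) * ((c + K *ᵥ x) i * (c + K *ᵥ x) j + K j i) := by
  have hpartial : (fun z => fderiv ℝ (fun z => Real.exp (q z)) z (Pi.single j 1))
      = fun z => Real.exp (q z) * (c + K *ᵥ z) j := by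
    funext z
    rw [fderiv_exp_apply_of_hasFDerivAt (hq z), dotProduct_single, mul_one]
  have hgrad : HasFDerivAt (fun z => (c + K *ᵥ z) j) (dotProductCLM (fun k => K j k)) x := by
    simpa only [dotProductCLM_apply, Pi.add_apply, mulVec] using
      (dotProductCLM (fun k => K j k)).hasFDerivAt.const_add (c j)
  rw [secondPartial, hpartial, ((hq x).exp.fun_mul hgrad).fderiv]
  simp only [Pi.add_apply, _root_.add_apply, _root_.smul_apply, dotProductCLM_apply,
    dotProduct_single, mul_one, smul_eq_mul]
  ring

lemma sum_mul_secondPartial_exp_of_hasFDerivAt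
    (hq : ∀ z, HasFDerivAt q (dotProductCLM (c + K *ᵥ z)) z) (a : Matrix (Fin n) (Fin n) ℝ)
    (x : Fin n → ℝ) :
    ∑ i, ∑ j, a i j * secondPartial (fun z => Real.exp (q z)) i j x
      = Real.exp (q x) * ((c + K *ᵥ x) ⬝ᵥ a *ᵥ (c + K *ᵥ x) + (a * K).trace) := by
  simp_rw [secondPartial_exp_of_hasFDerivAt hq]
  simp only [mul_add, Finset.sum_add_distrib, dotProduct, mulVec, Finset.mul_sum, trace,
    diag_apply, mul_apply]
  congr 1 <;> exact Finset.sum_congr rfl fun _ _ => Finset.sum_congr rfl fun _ _ => by ring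

end SecondPartial

lemma Matrix.IsSymm.mulVec_dotProduct {ι α : Type*} [Fintype ι] [CommSemiring α]
    {S : Matrix ι ι α} (hS : S.IsSymm) (u w : ι → α) : S *ᵥ u ⬝ᵥ w = u ⬝ᵥ S *ᵥ w := by
  rw [dotProduct_comm, ← dotProduct_transpose_mulVec, hS.eq]

/-- With `φ = exp q` and `∇q(x) = -v - (H + Hᵀ)x`, the left side is `(𝒜 - r)φ / φ`. -/
lemma riccati_residual_identity {ι : Type*} [Fintype ι] (b v δ : ι → ℝ) (B a G H : Matrix ι ι ℝ)
    (ha : a.IsSymm) (hH : H.IsSymm) (α : ℝ) (x : ι → ℝ) :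
    (-v + -(H + Hᵀ) *ᵥ x) ⬝ᵥ (b + B *ᵥ x)
      + 1 / 2 * ((-v + -(H + Hᵀ) *ᵥ x) ⬝ᵥ a *ᵥ (-v + -(H + Hᵀ) *ᵥ x) + (a * -(H + Hᵀ)).trace)
      - (α + δ ⬝ᵥ x + x ⬝ᵥ G *ᵥ x)
    = -(α - 1 / 2 * (v ⬝ᵥ a *ᵥ v) + (a * H).trace + v ⬝ᵥ b)
      + x ⬝ᵥ ((2:ℝ) • (H * a * H) - Bᵀ * H - H * B - G) *ᵥ x
      + x ⬝ᵥ ((2:ℝ) • (H * a) *ᵥ v - Bᵀ *ᵥ v - (2:ℝ) • H *ᵥ b - δ) := by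
  rw [hH.eq]
  simp only [mulVec_add, add_mulVec, neg_mulVec, mulVec_neg, sub_mulVec, smul_mulVec,
    ← mulVec_mulVec, dotProduct_add, add_dotProduct, neg_dotProduct, dotProduct_neg,
    dotProduct_sub, dotProduct_smul, smul_eq_mul, mul_neg, mul_add, trace_neg, trace_add]
  rw [← ha.mulVec_dotProduct v (H *ᵥ x), dotProduct_comm (a *ᵥ v), dotProduct_comm x δ]
  simp only [dotProduct_transpose_mulVec, hH.mulVec_dotProduct]
  ring

theorem quadratic_fitness_eigenpair_verification_general
    (n : ℕ)
    (b v δ : Fin n → ℝ) (B a G H : Matrix (Fin n) (Fin n) ℝ)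
    (ha : a.PosDef) (hH : H.IsSymm)
    (hRic : (2:ℝ) • (H * a * H) - B.transpose * H - H * B - G = 0)
    (hlin : (2:ℝ) • (H * a).mulVec v - B.transpose.mulVec v - (2:ℝ) • H.mulVec b - δ = 0)
    (α : ℝ)
    (r : (Fin n → ℝ) → ℝ) (hr : ∀ x, r x = α + δ ⬝ᵥ x + x ⬝ᵥ G.mulVec x)
    (φ : (Fin n → ℝ) → ℝ) (hφ : ∀ x, φ x = Real.exp (-(v ⬝ᵥ x) - x ⬝ᵥ H.mulVec x))
    (lam : ℝ)
    (hlam : lam = α - (1 / 2) * (v ⬝ᵥ a.mulVec v) + (a * H).trace + v ⬝ᵥ b) :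
    ∀ x : Fin n → ℝ,
      fderiv ℝ φ x (b + B.mulVec x)
        + (1 / 2) * (∑ i, ∑ j, a i j * secondPartial φ i j x)
        - r x * φ x
      = -lam * φ x := by
  intro x
  have hq := hasFDerivAt_neg_dotProduct_sub_dotProduct_mulVec_self v H
  obtain rfl : φ = fun z => Real.exp (-(v ⬝ᵥ z) - z ⬝ᵥ H *ᵥ z) := funext hφ
  have hresidual := riccati_residual_identity b v δ B a G H
    (isHermitian_iff_isSymm.1 ha.isHermitian) hH α x
  simp only [hRic, hlin, zero_mulVec, dotProduct_zero, add_zero] at hresidual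
  beta_reduce
  rw [fderiv_exp_apply_of_hasFDerivAt (hq x), sum_mul_secondPartial_exp_of_hasFDerivAt hq, hr,
    hlam]
  linear_combination Real.exp (-(v ⬝ᵥ x) - x ⬝ᵥ H *ᵥ x) * hresidual

/-- Eigenpair verification of Example 3.4: with the affine generator
`𝒜f(x) = (b+Bx)ᵀ∇f(x) + ½tr(a∇²f(x))` and fitness `g = -r`, the pair
`(λ, φ(x) = exp(-vᵀx - xᵀHx))` solves `(𝒜+g)φ = -λφ`, given the Riccati and linear
equations for `H` and `v`. -/
theorem quadratic_fitness_eigenpair_verification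
    (n : ℕ) (hn : 1 ≤ n)
    (b v δ : Fin n → ℝ) (B a G H : Matrix (Fin n) (Fin n) ℝ)
    (ha : a.PosDef) (hG : G.PosSemidef) (hH : H.IsSymm)
    (hRic : (2:ℝ) • (H * a * H) - B.transpose * H - H * B - G = 0)
    (hlin : (2:ℝ) • (H * a).mulVec v - B.transpose.mulVec v - (2:ℝ) • H.mulVec b - δ = 0)
    (α : ℝ)
    (r : (Fin n → ℝ) → ℝ) (hr : ∀ x, r x = α + δ ⬝ᵥ x + x ⬝ᵥ G.mulVec x)
    (φ : (Fin n → ℝ) → ℝ) (hφ : ∀ x, φ x = Real.exp (-(v ⬝ᵥ x) - x ⬝ᵥ H.mulVec x))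
    (lam : ℝ)
    (hlam : lam = α - (1 / 2) * (v ⬝ᵥ a.mulVec v) + (a * H).trace + v ⬝ᵥ b) :
    ∀ x : Fin n → ℝ,
      fderiv ℝ φ x (b + B.mulVec x)
        + (1 / 2) * (∑ i, ∑ j, a i j * secondPartial φ i j x)
        - r x * φ x
      = -lam * φ x :=
  quadratic_fitness_eigenpair_verification_general n b v δ B a G H ha hH hRic hlin α r hr φ hφ lam
    hlam
end
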